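/- arXiv:1809.06602 — 2 statements merged into one kernel-verified Lean document; each statement's English description precedes it below -/
import Mathlib

section
/- Let ψ be a nonnegative function on (0,∞) that is quasi-decreasing, i.e., there is a constant C > 0 such that ψ(t₁) ≤ C ψ(t₂) whenever 0 < t₂ < t₁. Suppose α > 0, β > -1, and 0 < p < 1. Then ∫₀^∞ u^{-α-1} (∫₀^u ψ(t) t^β dt)^p du ≤ c ∫₀^∞ u^{-α-1} (ψ(u) u^{β+1})^p du, where c depends only on C, α, β, p. -/
open MeasureTheory ENNReal Set

/-!
Cut `(0, u]` into the dyadic blocks `(uₙ, 2uₙ]`, `uₙ = 2^{-n-1} u`. On a block, quasi-monotonicity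
gives `ψ t ≤ C ψ(uₙ)` and `t^β ≤ max 1 2^β · uₙ^β`, so the inner integral is at most a constant
times `∑ₙ ψ(uₙ) uₙ^{β+1}`. As `p ≤ 1`, `x ↦ x^p` is subadditive and the power passes inside the
sum. In the outer integral the substitution `u ↦ 2^{n+1} u` turns the `n`-th term into
`2^{-(n+1)α}` times the right-hand side, and these factors form a convergent geometric series
because `α > 0`.
-/

namespace ENNReal

theorem rpow_sum_le_sum_rpow {ι : Type*} (s : Finset ι) (f : ι → ℝ≥0∞) {p : ℝ} (hp0 : 0 < p)
    (hp1 : p ≤ 1) : (∑ i ∈ s, f i) ^ p ≤ ∑ i ∈ s, f i ^ p :=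
  Finset.le_sum_of_subadditive (· ^ p) (by simp [hp0])
    (fun x y => rpow_add_le_add_rpow x y hp0.le hp1) s f

theorem rpow_tsum_le_tsum_rpow {ι : Type*} (f : ι → ℝ≥0∞) {p : ℝ} (hp0 : 0 < p) (hp1 : p ≤ 1) :
    (∑' i, f i) ^ p ≤ ∑' i, f i ^ p := by
  rw [← le_rpow_inv_iff hp0, ENNReal.tsum_eq_iSup_sum]
  exact iSup_le fun s => (le_rpow_inv_iff hp0).2 <|
    (rpow_sum_le_sum_rpow s f hp0 hp1).trans (ENNReal.sum_le_tsum s)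

end ENNReal

theorem lintegral_Ioi_comp_mul_left (f : ℝ → ℝ≥0∞) {c : ℝ} (hc : 0 < c) :
    ∫⁻ x in Ioi 0, f (c * x) = ENNReal.ofReal c⁻¹ * ∫⁻ x in Ioi 0, f x := by
  have he : MeasurableEmbedding (c * ·) := (Homeomorph.mulLeft₀ c hc.ne').measurableEmbedding
  have hpre : (c * ·) ⁻¹' Ioi 0 = Ioi (0 : ℝ) := by
    rw [preimage_const_mul_Ioi₀ _ hc, zero_div]
  rw [← he.lintegral_map]
  conv_lhs => rw [← hpre, ← he.restrict_map]
  rw [Real.map_volume_mul_left hc.ne', Measure.restrict_smul, lintegral_smul_measure,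
    abs_of_pos (inv_pos.2 hc), smul_eq_mul]

theorem lintegral_Ioi_rpow_mul_comp_mul_left (g : ℝ → ℝ≥0∞) (α : ℝ) {c : ℝ} (hc : 0 < c) :
    ∫⁻ u in Ioi 0, ENNReal.ofReal (u ^ (-α - 1)) * g (c * u) =
      ENNReal.ofReal (c ^ α) * ∫⁻ u in Ioi 0, ENNReal.ofReal (u ^ (-α - 1)) * g u := by
  have hweight : ∀ u ∈ Ioi (0 : ℝ), ENNReal.ofReal (u ^ (-α - 1)) =
      ENNReal.ofReal (c ^ (α + 1)) * ENNReal.ofReal ((c * u) ^ (-α - 1)) := fun u hu => by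
    rw [← ENNReal.ofReal_mul (by positivity), Real.mul_rpow hc.le hu.out.le, ← mul_assoc,
      ← Real.rpow_add hc]
    norm_num
  calc ∫⁻ u in Ioi 0, ENNReal.ofReal (u ^ (-α - 1)) * g (c * u)
      = ∫⁻ u in Ioi 0, ENNReal.ofReal (c ^ (α + 1)) *
          (ENNReal.ofReal ((c * u) ^ (-α - 1)) * g (c * u)) :=
        setLIntegral_congr_fun measurableSet_Ioi fun u hu => by rw [hweight u hu, mul_assoc]
    _ = ENNReal.ofReal (c ^ (α + 1)) * (ENNReal.ofReal c⁻¹ *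
          ∫⁻ u in Ioi 0, ENNReal.ofReal (u ^ (-α - 1)) * g u) := by
        rw [lintegral_const_mul' _ _ ofReal_ne_top,
          lintegral_Ioi_comp_mul_left (fun v => ENNReal.ofReal (v ^ (-α - 1)) * g v) hc]
    _ = _ := by
        rw [← mul_assoc, ← ENNReal.ofReal_mul (by positivity), ← Real.rpow_neg_one,
          ← Real.rpow_add hc]
        norm_num

theorem Ioc_zero_subset_iUnion_Ioc_pow_mul {y : ℝ} (hy0 : 0 < y) (hy1 : y < 1) (u : ℝ) :
    Ioc 0 u ⊆ ⋃ n : ℕ, Ioc (y ^ (n + 1) * u) (y ^ n * u) := by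
  rintro t ⟨ht0, htu⟩
  have hu : 0 < u := ht0.trans_le htu
  obtain ⟨n, hlt, hle⟩ :=
    exists_nat_pow_near_of_lt_one (div_pos ht0 hu) ((div_le_one hu).2 htu) hy0 hy1
  exact mem_iUnion.2 ⟨n, (lt_div_iff₀ hu).1 hlt, (div_le_iff₀ hu).1 hle⟩

theorem rpow_le_max_one_two_rpow_mul {a t : ℝ} (β : ℝ) (ha : 0 < a) (ht : t ∈ Ioc a (2 * a)) :
    t ^ β ≤ max 1 (2 ^ β) * a ^ β := by
  rcases le_or_gt 0 β with hβ | hβ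
  · calc t ^ β ≤ (2 * a) ^ β := Real.rpow_le_rpow (ha.trans ht.1).le ht.2 hβ
      _ = 2 ^ β * a ^ β := Real.mul_rpow zero_le_two ha.le
      _ ≤ max 1 (2 ^ β) * a ^ β := by gcongr; exact le_max_right _ _
  · calc t ^ β ≤ a ^ β := Real.rpow_le_rpow_of_nonpos ha ht.1.le hβ.le
      _ ≤ max 1 (2 ^ β) * a ^ β :=
        le_mul_of_one_le_left (Real.rpow_nonneg ha.le β) (le_max_left _ _)

theorem setLIntegral_Ioc_two_mul_le {ψ : ℝ → ℝ} (β : ℝ) {a M : ℝ} (ha : 0 < a) (hM : 0 ≤ M)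
    (hψ : ∀ t ∈ Ioc a (2 * a), ψ t ≤ M) :
    ∫⁻ t in Ioc a (2 * a), ENNReal.ofReal (ψ t * t ^ β) ≤
      ENNReal.ofReal (max 1 (2 ^ β) * M * a ^ (β + 1)) := by
  have hbound : ∀ t ∈ Ioc a (2 * a), ψ t * t ^ β ≤ M * (max 1 (2 ^ β) * a ^ β) := fun t ht =>
    mul_le_mul (hψ t ht) (rpow_le_max_one_two_rpow_mul β ha ht)
      (Real.rpow_nonneg (ha.trans ht.1).le β) hM
  calc ∫⁻ t in Ioc a (2 * a), ENNReal.ofReal (ψ t * t ^ β)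
      ≤ ∫⁻ _ in Ioc a (2 * a), ENNReal.ofReal (M * (max 1 (2 ^ β) * a ^ β)) :=
        setLIntegral_mono' measurableSet_Ioc fun t ht => ENNReal.ofReal_le_ofReal (hbound t ht)
    _ = ENNReal.ofReal (M * (max 1 (2 ^ β) * a ^ β)) * ENNReal.ofReal a := by
        rw [setLIntegral_const, Real.volume_Ioc, two_mul, add_sub_cancel_right]
    _ = ENNReal.ofReal (max 1 (2 ^ β) * M * a ^ (β + 1)) := by
        rw [← ENNReal.ofReal_mul (by positivity), Real.rpow_add_one ha.ne']
        ring_nf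

theorem lintegral_Ioc_zero_le_tsum_dyadic {ψ : ℝ → ℝ} {C : ℝ} (β : ℝ) (hC : 0 ≤ C)
    (hψ : ∀ t ∈ Ioi (0 : ℝ), 0 ≤ ψ t) (hqd : ∀ t₁ t₂ : ℝ, 0 < t₂ → t₂ < t₁ → ψ t₁ ≤ C * ψ t₂)
    {u : ℝ} (hu : 0 < u) :
    ∫⁻ t in Ioc 0 u, ENNReal.ofReal (ψ t * t ^ β) ≤
      ∑' n : ℕ, ENNReal.ofReal (max 1 (2 ^ β) * C) *
        ENNReal.ofReal (ψ (2⁻¹ ^ (n + 1) * u) * (2⁻¹ ^ (n + 1) * u) ^ (β + 1)) := by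
  calc ∫⁻ t in Ioc 0 u, ENNReal.ofReal (ψ t * t ^ β)
      ≤ ∫⁻ t in ⋃ n : ℕ, Ioc (2⁻¹ ^ (n + 1) * u) (2⁻¹ ^ n * u), ENNReal.ofReal (ψ t * t ^ β) :=
        lintegral_mono_set (Ioc_zero_subset_iUnion_Ioc_pow_mul (by norm_num) (by norm_num) u)
    _ ≤ ∑' n : ℕ, ∫⁻ t in Ioc (2⁻¹ ^ (n + 1) * u) (2⁻¹ ^ n * u), ENNReal.ofReal (ψ t * t ^ β) :=
        lintegral_iUnion_le _ _
    _ ≤ _ := ENNReal.tsum_le_tsum fun n => by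
        set a : ℝ := 2⁻¹ ^ (n + 1) * u
        have ha : 0 < a := by positivity
        have h2a : 2⁻¹ ^ n * u = 2 * a := by ring
        rw [h2a, ← ENNReal.ofReal_mul (by positivity)]
        convert setLIntegral_Ioc_two_mul_le β ha (mul_nonneg hC (hψ a ha))
          fun t ht => hqd t a ha ht.1 using 2
        ring

theorem rpow_lintegral_Ioc_zero_le_tsum_dyadic {ψ : ℝ → ℝ} {C p : ℝ} (β : ℝ) (hC : 0 ≤ C)
    (hp0 : 0 < p) (hp1 : p ≤ 1) (hψ : ∀ t ∈ Ioi (0 : ℝ), 0 ≤ ψ t)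
    (hqd : ∀ t₁ t₂ : ℝ, 0 < t₂ → t₂ < t₁ → ψ t₁ ≤ C * ψ t₂) {u : ℝ} (hu : 0 < u) :
    (∫⁻ t in Ioc 0 u, ENNReal.ofReal (ψ t * t ^ β)) ^ p ≤
      ∑' n : ℕ, ENNReal.ofReal ((max 1 (2 ^ β) * C) ^ p) *
        ENNReal.ofReal (ψ (2⁻¹ ^ (n + 1) * u) * (2⁻¹ ^ (n + 1) * u) ^ (β + 1)) ^ p := by
  have hK : 0 ≤ max 1 (2 ^ β) * C := mul_nonneg (le_max_of_le_left zero_le_one) hC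
  calc (∫⁻ t in Ioc 0 u, ENNReal.ofReal (ψ t * t ^ β)) ^ p
      ≤ (∑' n : ℕ, ENNReal.ofReal (max 1 (2 ^ β) * C) *
          ENNReal.ofReal (ψ (2⁻¹ ^ (n + 1) * u) * (2⁻¹ ^ (n + 1) * u) ^ (β + 1))) ^ p := by
        gcongr
        exact lintegral_Ioc_zero_le_tsum_dyadic β hC hψ hqd hu
    _ ≤ ∑' n : ℕ, (ENNReal.ofReal (max 1 (2 ^ β) * C) *
          ENNReal.ofReal (ψ (2⁻¹ ^ (n + 1) * u) * (2⁻¹ ^ (n + 1) * u) ^ (β + 1))) ^ p :=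
        ENNReal.rpow_tsum_le_tsum_rpow _ hp0 hp1
    _ = _ := tsum_congr fun n => by
        rw [ENNReal.mul_rpow_of_nonneg _ _ hp0.le, ENNReal.ofReal_rpow_of_nonneg hK hp0.le]

theorem tsum_ofReal_pow_succ_rpow {y α : ℝ} (hy0 : 0 ≤ y) (hy1 : y < 1) (hα : 0 < α) :
    ∑' n : ℕ, ENNReal.ofReal ((y ^ (n + 1)) ^ α) = ENNReal.ofReal (y ^ α / (1 - y ^ α)) := by
  have hr0 : 0 ≤ y ^ α := Real.rpow_nonneg hy0 α
  have hsum : HasSum (fun n : ℕ => (y ^ (n + 1)) ^ α) (y ^ α / (1 - y ^ α)) := by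
    simp_rw [← Real.rpow_pow_comm hy0, pow_succ', div_eq_mul_inv]
    exact (hasSum_geometric_of_lt_one hr0 (Real.rpow_lt_one hy0 hy1 hα)).mul_left _
  rw [← ENNReal.ofReal_tsum_of_nonneg (fun n => by positivity) hsum.summable, hsum.tsum_eq]

theorem lintegral_Ioi_rpow_mul_tsum_comp_pow_mul {g : ℝ → ℝ≥0∞} (hg : Measurable g) {y α : ℝ}
    (hy0 : 0 < y) (hy1 : y < 1) (hα : 0 < α) :
    ∫⁻ u in Ioi 0, ENNReal.ofReal (u ^ (-α - 1)) * ∑' n : ℕ, g (y ^ (n + 1) * u) =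
      ENNReal.ofReal (y ^ α / (1 - y ^ α)) *
        ∫⁻ u in Ioi 0, ENNReal.ofReal (u ^ (-α - 1)) * g u := by
  simp_rw [← ENNReal.tsum_mul_left]
  rw [lintegral_tsum fun n => by fun_prop, ← tsum_ofReal_pow_succ_rpow hy0.le hy1 hα,
    ← ENNReal.tsum_mul_right]
  exact tsum_congr fun n => lintegral_Ioi_rpow_mul_comp_mul_left g α (by positivity)

theorem hardy_type_quasi_decreasing_general (C α β p : ℝ) (hC : 0 < C) (hα : 0 < α)
    (hp0 : 0 < p) (hp1 : p < 1) :
    ∃ c > 0, ∀ ψ : ℝ → ℝ, Measurable ψ → (∀ t ∈ Set.Ioi (0:ℝ), 0 ≤ ψ t) →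
      (∀ t₁ t₂ : ℝ, 0 < t₂ → t₂ < t₁ → ψ t₁ ≤ C * ψ t₂) →
      ∫⁻ u in Set.Ioi (0:ℝ), ENNReal.ofReal (u ^ (-α - 1)) *
          (∫⁻ t in Set.Ioc (0:ℝ) u, ENNReal.ofReal (ψ t * t ^ β)) ^ p
        ≤ ENNReal.ofReal c * ∫⁻ u in Set.Ioi (0:ℝ),
            ENNReal.ofReal (u ^ (-α - 1)) * ENNReal.ofReal (ψ u * u ^ (β + 1)) ^ p := by
  set K := max 1 (2 ^ β) * C
  set r : ℝ := 2⁻¹ ^ α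
  have hK : 0 < K := mul_pos (lt_max_of_lt_left one_pos) hC
  have hr1 : r < 1 := Real.rpow_lt_one (by norm_num) (by norm_num) hα
  refine ⟨K ^ p * (r / (1 - r)), mul_pos (by positivity) (div_pos (by positivity) (by linarith)),
    fun ψ hψm hψ hqd => ?_⟩
  set g : ℝ → ℝ≥0∞ := fun v => ENNReal.ofReal (ψ v * v ^ (β + 1)) ^ p
  calc _ ≤ ∫⁻ u in Ioi 0, ENNReal.ofReal (u ^ (-α - 1)) *
          ∑' n : ℕ, ENNReal.ofReal (K ^ p) * g (2⁻¹ ^ (n + 1) * u) :=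
        setLIntegral_mono' measurableSet_Ioi fun u hu => by
          gcongr
          exact rpow_lintegral_Ioc_zero_le_tsum_dyadic β hC.le hp0 hp1.le hψ hqd hu
    _ = ENNReal.ofReal (K ^ p * (r / (1 - r))) *
          ∫⁻ u in Ioi 0, ENNReal.ofReal (u ^ (-α - 1)) * g u := by
        simp_rw [ENNReal.tsum_mul_left, mul_left_comm _ (ENNReal.ofReal (K ^ p))]
        rw [lintegral_const_mul' _ _ ofReal_ne_top, lintegral_Ioi_rpow_mul_tsum_comp_pow_mul
          (by fun_prop) (by norm_num) (by norm_num) hα, ENNReal.ofReal_mul (by positivity),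
          mul_assoc]

/-- Hardy-type inequality for quasi-decreasing functions (Proposition 2.2). -/
theorem hardy_type_quasi_decreasing (C α β p : ℝ) (hC : 0 < C) (hα : 0 < α)
    (hβ : -1 < β) (hp0 : 0 < p) (hp1 : p < 1) :
    ∃ c > 0, ∀ ψ : ℝ → ℝ, Measurable ψ → (∀ t ∈ Set.Ioi (0:ℝ), 0 ≤ ψ t) →
      (∀ t₁ t₂ : ℝ, 0 < t₂ → t₂ < t₁ → ψ t₁ ≤ C * ψ t₂) →
      ∫⁻ u in Set.Ioi (0:ℝ), ENNReal.ofReal (u ^ (-α - 1)) *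
          (∫⁻ t in Set.Ioc (0:ℝ) u, ENNReal.ofReal (ψ t * t ^ β)) ^ p
        ≤ ENNReal.ofReal c * ∫⁻ u in Set.Ioi (0:ℝ),
            ENNReal.ofReal (u ^ (-α - 1)) * ENNReal.ofReal (ψ u * u ^ (β + 1)) ^ p :=
  hardy_type_quasi_decreasing_general C α β p hC hα hp0 hp1
end

section
/- Let φ ∈ L^p(ℝ) with 1 ≤ p < ∞. Then for every t > 0, φ**(t) - φ*(t) ≤ 2 t^{-1/p} ω(φ; t)_p, where ω(φ; t)_p = sup_{|h| ≤ t} ‖φ(·+h) - φ(·)‖_p is the modulus of continuity in L^p. -/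
/-!
Put `B = φ*(t)` and `E = {|φ| > B}`, so that `|E| ≤ t`. Since `φ*` and `|φ|` are equimeasurable,
the layer cake formula gives `t (φ**(t) - φ*(t)) ≤ ∫_E (|φ| - B)`. For `x ∈ E` the interval
`(x - t, x + t]` meets the complement of `E`, where `|φ| ≤ B`, in a set of measure at least `t`,
hence `t (|φ(x)| - B) ≤ ∫_{-t}^{t} |φ(x + h) - φ(x)| dh`. Integrating over `E`, exchanging the
integrals and applying Hölder's inequality on `E` bounds the inner integral by
`ω(φ; t)_p t^{1 - 1/p}`, which gives the estimate.
-/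
open MeasureTheory ENNReal Set
noncomputable section

/-- Nonincreasing rearrangement of an `ℝ≥0∞`-valued function. -/
def rearr {α : Type*} [MeasurableSpace α] (μ : Measure α) (f : α → ℝ≥0∞) (t : ℝ) : ℝ≥0∞ :=
  sInf {y : ℝ≥0∞ | μ {x | y < f x} ≤ ENNReal.ofReal t}

/-- Nonincreasing rearrangement of a real-valued function. -/
def rearrR {α : Type*} [MeasurableSpace α] (μ : Measure α) (f : α → ℝ) (t : ℝ) : ℝ≥0∞ :=
  rearr μ (fun x => (‖f x‖₊ : ℝ≥0∞)) t

/-- The maximal function `f**(t) = t⁻¹ ∫₀ᵗ f*(u) du`. -/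
def rearr2 {α : Type*} [MeasurableSpace α] (μ : Measure α) (f : α → ℝ≥0∞) (t : ℝ) : ℝ≥0∞ :=
  (∫⁻ u in Set.Ioc (0:ℝ) t, rearr μ f u) / ENNReal.ofReal t

/-- L^p modulus of continuity ω(φ;t)_p = sup_{|h| ≤ t} ‖φ(·+h) − φ‖_p. -/
def omegaMod (φ : ℝ → ℝ) (p : ℝ≥0∞) (t : ℝ) : ℝ≥0∞ :=
  ⨆ (h : ℝ) (_ : |h| ≤ t), eLpNorm (fun x => φ (x + h) - φ x) p volume

theorem volume_setOf_ofReal_lt_inter_Ioi (c : ℝ≥0∞) :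
    volume ({s : ℝ | ENNReal.ofReal s < c} ∩ Ioi 0) = c := by
  rcases eq_or_ne c ∞ with rfl | hc
  · simp
  · have : {s : ℝ | ENNReal.ofReal s < c} ∩ Ioi 0 = Ioo 0 c.toReal := by
      ext s
      simp only [mem_inter_iff, mem_ofPred_eq, mem_Ioi, mem_Ioo]
      exact ⟨fun h => ⟨h.2, (ENNReal.ofReal_lt_iff_lt_toReal h.2.le hc).1 h.1⟩,
        fun h => ⟨(ENNReal.ofReal_lt_iff_lt_toReal h.1.le hc).2 h.2, h.1⟩⟩
    simp [this, hc]

theorem lintegral_eq_lintegral_meas_ofReal_lt {α : Type*} [MeasurableSpace α] (μ : Measure α)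
    [SFinite μ] {g : α → ℝ≥0∞} (hg : Measurable g) :
    ∫⁻ x, g x ∂μ = ∫⁻ s in Ioi 0, μ {x | ENNReal.ofReal s < g x} := by
  have hS : MeasurableSet {q : α × ℝ | ENNReal.ofReal q.2 < g q.1} :=
    measurableSet_lt (ENNReal.measurable_ofReal.comp measurable_snd) (hg.comp measurable_fst)
  calc ∫⁻ x, g x ∂μ = μ.prod (volume.restrict (Ioi 0)) {q | ENNReal.ofReal q.2 < g q.1} := by
        rw [Measure.prod_apply hS]
        refine lintegral_congr fun x => ?_
        rw [Measure.restrict_apply' measurableSet_Ioi]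
        exact (volume_setOf_ofReal_lt_inter_Ioi (g x)).symm
    _ = _ := Measure.prod_apply_symm hS

theorem lintegral_le_lintegral_of_meas_lt_le {α β : Type*} [MeasurableSpace α]
    [MeasurableSpace β] {μ : Measure α} {ν : Measure β} [SFinite μ] [SFinite ν]
    {f : α → ℝ≥0∞} {g : β → ℝ≥0∞} (hf : Measurable f) (hg : Measurable g)
    (h : ∀ y, ν {x | y < g x} ≤ μ {x | y < f x}) :
    ∫⁻ x, g x ∂ν ≤ ∫⁻ x, f x ∂μ := by
  rw [lintegral_eq_lintegral_meas_ofReal_lt ν hg, lintegral_eq_lintegral_meas_ofReal_lt μ hf]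
  exact lintegral_mono fun s => h _

section Rearrangement

variable {α : Type*} [MeasurableSpace α] (μ : Measure α)

theorem rearr_antitone (f : α → ℝ≥0∞) : Antitone (rearr μ f) :=
  fun _ _ hab => sInf_le_sInf fun _ hy => hy.trans (ENNReal.ofReal_le_ofReal hab)

theorem measure_rearr_lt_le (f : α → ℝ≥0∞) (t : ℝ) :
    μ {x | rearr μ f t < f x} ≤ ENNReal.ofReal t := by
  set S := {y : ℝ≥0∞ | μ {x | y < f x} ≤ ENNReal.ofReal t}
  rcases S.eq_empty_or_nonempty with hS | hS
  · have htop : rearr μ f t = ∞ := (congrArg sInf hS).trans sInf_empty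
    simp [htop]
  obtain ⟨u, hu_anti, hu_lim, hu_mem⟩ := exists_seq_tendsto_sInf hS (OrderBot.bddBelow S)
  have hunion : {x | rearr μ f t < f x} = ⋃ n, {x | u n < f x} := by
    ext x
    simp only [mem_ofPred_eq, mem_iUnion]
    exact ⟨fun hx => (hu_lim.eventually (gt_mem_nhds hx)).exists,
      fun ⟨n, hn⟩ => (sInf_le (hu_mem n)).trans_lt hn⟩
  have hmono : Monotone fun n => {x | u n < f x} := fun m n hmn x hx => (hu_anti hmn).trans_lt hx
  rw [hunion, hmono.measure_iUnion]
  exact iSup_le hu_mem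

theorem volume_lt_rearr_inter_Ioi_le (f : α → ℝ≥0∞) (y : ℝ≥0∞) :
    volume ({u : ℝ | y < rearr μ f u} ∩ Ioi 0) ≤ μ {x | y < f x} := by
  calc volume ({u : ℝ | y < rearr μ f u} ∩ Ioi 0)
      ≤ volume ({s : ℝ | ENNReal.ofReal s < μ {x | y < f x}} ∩ Ioi 0) := by
        refine measure_mono fun u ⟨hu, hu0⟩ => ⟨?_, hu0⟩
        by_contra hle
        have hy : μ {x | y < f x} ≤ ENNReal.ofReal u := not_lt.1 hle
        exact (show rearr μ f u ≤ y from sInf_le hy).not_gt hu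
    _ = μ {x | y < f x} := volume_setOf_ofReal_lt_inter_Ioi _

theorem setLIntegral_rearr_tsub_le [SFinite μ] {f : α → ℝ≥0∞} (hf : Measurable f) (c : ℝ≥0∞) :
    ∫⁻ u in Ioi 0, (rearr μ f u - c) ≤ ∫⁻ x, (f x - c) ∂μ := by
  have hr : Measurable fun u => rearr μ f u - c :=
    (rearr_antitone μ f).measurable.sub measurable_const
  refine lintegral_le_lintegral_of_meas_lt_le (hf.sub measurable_const) hr fun y => ?_
  simp_rw [lt_tsub_iff_left]
  rw [Measure.restrict_apply' measurableSet_Ioi]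
  exact volume_lt_rearr_inter_Ioi_le μ f _

theorem rearr2_tsub_rearr_le [SFinite μ] {f : α → ℝ≥0∞} (hf : Measurable f) {t : ℝ}
    (ht : 0 < t) :
    rearr2 μ f t - rearr μ f t ≤
      (∫⁻ x in {x | rearr μ f t < f x}, (f x - rearr μ f t) ∂μ) / ENNReal.ofReal t := by
  set B := rearr μ f t
  set τ := ENNReal.ofReal t
  have hτ0 : τ ≠ 0 := (ENNReal.ofReal_pos.2 ht).ne'
  have hexcess : ∫⁻ u in Ioc 0 t, (rearr μ f u - B) ≤ ∫⁻ x in {x | B < f x}, (f x - B) ∂μ := by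
    rw [setLIntegral_eq_of_support_subset (s := {x | B < f x}) (f := fun x => f x - B)
      fun x hx => tsub_pos_iff_lt.1 (pos_iff_ne_zero.2 hx)]
    exact (lintegral_mono_set Ioc_subset_Ioi_self).trans (setLIntegral_rearr_tsub_le μ hf B)
  have hsplit : ∫⁻ u in Ioc 0 t, rearr μ f u ≤ (∫⁻ u in Ioc 0 t, (rearr μ f u - B)) + B * τ :=
    calc ∫⁻ u in Ioc 0 t, rearr μ f u ≤ ∫⁻ u in Ioc 0 t, ((rearr μ f u - B) + B) :=
          lintegral_mono fun _ => le_tsub_add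
      _ = _ := by
          rw [lintegral_add_right _ measurable_const, setLIntegral_const, Real.volume_Ioc,
            sub_zero]
  rw [tsub_le_iff_right, rearr2]
  calc (∫⁻ u in Ioc 0 t, rearr μ f u) / τ
      ≤ ((∫⁻ x in {x | B < f x}, (f x - B) ∂μ) + B * τ) / τ :=
        ENNReal.div_le_div_right (hsplit.trans (add_le_add hexcess le_rfl)) τ
    _ = _ := by rw [ENNReal.add_div, ENNReal.mul_div_cancel_right hτ0 ENNReal.ofReal_ne_top]

theorem rearr_congr_ae {f g : α → ℝ≥0∞} (h : f =ᵐ[μ] g) : rearr μ f = rearr μ g := by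
  ext t
  have hlevel : ∀ y : ℝ≥0∞, μ {x | y < f x} = μ {x | y < g x} := fun y =>
    measure_congr <| h.mono fun x hx => show (y < f x) = (y < g x) by rw [hx]
  simp only [rearr, hlevel]

theorem rearr2_congr_ae {f g : α → ℝ≥0∞} (h : f =ᵐ[μ] g) : rearr2 μ f = rearr2 μ g := by
  ext t
  simp only [rearr2, rearr_congr_ae μ h]

end Rearrangement

theorem setLIntegral_enorm_le_eLpNorm_mul_measure_rpow {α E : Type*} [MeasurableSpace α]
    [NormedAddCommGroup E] {μ : Measure α} {p : ℝ≥0∞} (hp : 1 ≤ p) {g : α → E}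
    (hg : AEStronglyMeasurable g μ) (s : Set α) :
    ∫⁻ x in s, ‖g x‖ₑ ∂μ ≤ eLpNorm g p μ * μ s ^ (1 - 1 / p.toReal) := by
  have := eLpNorm_le_eLpNorm_mul_rpow_measure_univ hp hg.restrict (μ := μ.restrict s)
  rw [eLpNorm_one_eq_lintegral_enorm, Measure.restrict_apply_univ, ENNReal.toReal_one,
    div_one] at this
  exact this.trans (mul_le_mul_left (eLpNorm_mono_measure _ Measure.restrict_le_self) _)

section Translates

theorem eLpNorm_translate_sub_le_omegaMod (φ : ℝ → ℝ) (p : ℝ≥0∞) {t h : ℝ} (hh : |h| ≤ t) :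
    eLpNorm (fun x => φ (x + h) - φ x) p volume ≤ omegaMod φ p t :=
  le_iSup₂ (f := fun (h : ℝ) (_ : |h| ≤ t) => eLpNorm (fun x => φ (x + h) - φ x) p volume) h hh

theorem omegaMod_congr_ae {φ ψ : ℝ → ℝ} (h : φ =ᵐ[volume] ψ) (p : ℝ≥0∞) (t : ℝ) :
    omegaMod φ p t = omegaMod ψ p t := by
  refine iSup_congr fun s => iSup_congr fun _ => eLpNorm_congr_ae ?_
  have hs : (fun x => φ (x + s)) =ᵐ[volume] fun x => ψ (x + s) :=
    (measurePreserving_add_right volume s).quasiMeasurePreserving.ae_eq h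
  filter_upwards [h, hs] with x hx hxs
  rw [hx, hxs]

variable {ψ : ℝ → ℝ} {E : Set ℝ} {c : ℝ≥0∞} {t : ℝ}

theorem ofReal_mul_enorm_tsub_le (hE : MeasurableSet E) (hc : ∀ y ∉ E, ‖ψ y‖ₑ ≤ c)
    (ht : 0 ≤ t) (hEt : volume E ≤ ENNReal.ofReal t) (x : ℝ) :
    ENNReal.ofReal t * (‖ψ x‖ₑ - c) ≤ ∫⁻ h in Ioc (-t) t, ‖ψ (x + h) - ψ x‖ₑ := by
  set S := Ioc (x - t) (x + t) \ E
  have hS : ENNReal.ofReal t ≤ volume S := by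
    calc ENNReal.ofReal t ≤ ENNReal.ofReal (2 * t) - ENNReal.ofReal t := by
          rw [← ENNReal.ofReal_sub _ ht]
          exact ENNReal.ofReal_le_ofReal (by linarith)
      _ ≤ volume (Ioc (x - t) (x + t)) - volume E := by
          rw [Real.volume_Ioc, show x + t - (x - t) = 2 * t by ring]
          exact tsub_le_tsub_left hEt _
      _ ≤ volume S := le_measure_sdiff
  have hbound : ∀ y ∈ S, ‖ψ x‖ₑ - c ≤ ‖ψ y - ψ x‖ₑ := fun y hy => by
    rw [tsub_le_iff_right, enorm_sub_rev]
    calc ‖ψ x‖ₑ = ‖(ψ x - ψ y) + ψ y‖ₑ := by rw [sub_add_cancel]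
      _ ≤ ‖ψ x - ψ y‖ₑ + c := (enorm_add_le _ _).trans (add_le_add le_rfl (hc y hy.2))
  calc ENNReal.ofReal t * (‖ψ x‖ₑ - c) ≤ volume S * (‖ψ x‖ₑ - c) := mul_le_mul' hS le_rfl
    _ = ∫⁻ _ in S, (‖ψ x‖ₑ - c) := by rw [setLIntegral_const, mul_comm]
    _ ≤ ∫⁻ y in S, ‖ψ y - ψ x‖ₑ := setLIntegral_mono' (measurableSet_Ioc.diff hE) hbound
    _ ≤ ∫⁻ y in Ioc (x - t) (x + t), ‖ψ y - ψ x‖ₑ := lintegral_mono_set sdiff_subset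
    _ = ∫⁻ h in Ioc (-t) t, ‖ψ (x + h) - ψ x‖ₑ := by
        rw [← (measurePreserving_add_left volume x).setLIntegral_comp_preimage_emb
          (measurableEmbedding_addLeft x)]
        simp

theorem ofReal_mul_setLIntegral_tsub_le (hψ : Measurable ψ) (hE : MeasurableSet E)
    (hc : ∀ y ∉ E, ‖ψ y‖ₑ ≤ c) (ht : 0 ≤ t) (hEt : volume E ≤ ENNReal.ofReal t) :
    ENNReal.ofReal t * ∫⁻ x in E, (‖ψ x‖ₑ - c) ≤
      ∫⁻ h in Ioc (-t) t, ∫⁻ x in E, ‖ψ (x + h) - ψ x‖ₑ := by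
  rw [← lintegral_const_mul (f := fun x => ‖ψ x‖ₑ - c) _ (hψ.enorm.sub measurable_const)]
  refine (lintegral_mono fun x => ofReal_mul_enorm_tsub_le hE hc ht hEt x).trans_eq ?_
  refine lintegral_lintegral_swap (Measurable.aemeasurable ?_)
  exact ((hψ.comp (measurable_fst.add measurable_snd)).sub (hψ.comp measurable_fst)).enorm

theorem setLIntegral_enorm_tsub_le_omegaMod {p : ℝ≥0∞} (hp : 1 ≤ p) (hψ : Measurable ψ)
    (hE : MeasurableSet E) (hc : ∀ y ∉ E, ‖ψ y‖ₑ ≤ c) (ht : 0 < t)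
    (hEt : volume E ≤ ENNReal.ofReal t) :
    ∫⁻ x in E, (‖ψ x‖ₑ - c) ≤
      2 * omegaMod ψ p t * ENNReal.ofReal t ^ (1 - 1 / p.toReal) := by
  set τ := ENNReal.ofReal t
  set Ω := omegaMod ψ p t
  have hr : 0 ≤ 1 - 1 / p.toReal := by
    rcases eq_or_ne p ∞ with rfl | hp_top
    · simp
    · have : 1 ≤ p.toReal := by simpa using ENNReal.toReal_mono hp_top hp
      exact sub_nonneg.2 (div_le_one_of_le₀ this (by positivity))
  have hinner : ∀ h ∈ Ioc (-t) t,
      ∫⁻ x in E, ‖ψ (x + h) - ψ x‖ₑ ≤ Ω * τ ^ (1 - 1 / p.toReal) :=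
    fun h hh => (setLIntegral_enorm_le_eLpNorm_mul_measure_rpow hp
      ((hψ.comp (measurable_add_const h)).sub hψ).aestronglyMeasurable E).trans <|
      mul_le_mul' (eLpNorm_translate_sub_le_omegaMod ψ p (abs_le.2 ⟨hh.1.le, hh.2⟩))
        (ENNReal.rpow_le_rpow hEt hr)
  refine (ENNReal.mul_le_mul_iff_right (ENNReal.ofReal_pos.2 ht).ne' ENNReal.ofReal_ne_top).1 ?_
  calc τ * ∫⁻ x in E, (‖ψ x‖ₑ - c)
      ≤ ∫⁻ h in Ioc (-t) t, ∫⁻ x in E, ‖ψ (x + h) - ψ x‖ₑ :=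
        ofReal_mul_setLIntegral_tsub_le hψ hE hc ht.le hEt
    _ ≤ ∫⁻ _ in Ioc (-t) t, Ω * τ ^ (1 - 1 / p.toReal) :=
        setLIntegral_mono' measurableSet_Ioc hinner
    _ = τ * (2 * Ω * τ ^ (1 - 1 / p.toReal)) := by
        rw [setLIntegral_const, Real.volume_Ioc, show t - -t = 2 * t by ring,
          ENNReal.ofReal_mul zero_le_two, ENNReal.ofReal_ofNat]
        ring

end Translates

theorem rearr2_tsub_rearr_le_omegaMod {p : ℝ≥0∞} (hp : 1 ≤ p) {ψ : ℝ → ℝ} (hψ : Measurable ψ)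
    {t : ℝ} (ht : 0 < t) :
    rearr2 volume (fun x => ‖ψ x‖ₑ) t - rearr volume (fun x => ‖ψ x‖ₑ) t
      ≤ 2 * ENNReal.ofReal t ^ (-(1 / p.toReal)) * omegaMod ψ p t := by
  set B := rearr volume (fun x => ‖ψ x‖ₑ) t
  set τ := ENNReal.ofReal t
  have hτ0 : τ ≠ 0 := (ENNReal.ofReal_pos.2 ht).ne'
  have hexp : τ ^ (-(1 / p.toReal)) = τ ^ (1 - 1 / p.toReal) * τ⁻¹ := by
    rw [← ENNReal.rpow_neg_one, ← ENNReal.rpow_add _ _ hτ0 ENNReal.ofReal_ne_top]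
    ring_nf
  calc rearr2 volume (fun x => ‖ψ x‖ₑ) t - B ≤ (∫⁻ x in {x | B < ‖ψ x‖ₑ}, (‖ψ x‖ₑ - B)) / τ :=
        rearr2_tsub_rearr_le volume hψ.enorm ht
    _ ≤ 2 * omegaMod ψ p t * τ ^ (1 - 1 / p.toReal) / τ :=
        ENNReal.div_le_div_right (setLIntegral_enorm_tsub_le_omegaMod hp hψ
          (measurableSet_lt measurable_const hψ.enorm) (fun _ hy => not_lt.1 hy) ht
          (measure_rearr_lt_le volume _ t)) τ
    _ = 2 * τ ^ (-(1 / p.toReal)) * omegaMod ψ p t := by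
        rw [hexp, div_eq_mul_inv]
        ring

/-- Ul'yanov's estimate: φ**(t) − φ*(t) ≤ 2 t^{-1/p} ω(φ;t)_p. -/
theorem ulyanov_estimate (p : ℝ) (hp : 1 ≤ p) (φ : ℝ → ℝ)
    (hφ : MemLp φ (ENNReal.ofReal p) volume) (t : ℝ) (ht : 0 < t) :
    rearr2 volume (fun x => (‖φ x‖₊ : ℝ≥0∞)) t - rearrR volume φ t
      ≤ 2 * ENNReal.ofReal (t ^ (-(1/p))) * omegaMod φ (ENNReal.ofReal p) t := by
  have hae := hφ.1.ae_eq_mk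
  have hnorm : (fun x => (‖φ x‖₊ : ℝ≥0∞)) =ᵐ[volume] fun x => ‖hφ.1.mk φ x‖ₑ :=
    hae.mono fun x hx => by simp only [hx, enorm_eq_nnnorm]
  rw [rearrR, rearr2_congr_ae volume hnorm, rearr_congr_ae volume hnorm,
    omegaMod_congr_ae hae, ← ENNReal.ofReal_rpow_of_pos ht]
  simpa [ENNReal.toReal_ofReal (zero_le_one.trans hp)] using
    rearr2_tsub_rearr_le_omegaMod (ENNReal.one_le_ofReal.2 hp)
      hφ.1.stronglyMeasurable_mk.measurable ht
end
end
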